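/- arXiv:2411.02251 — 6 statements merged into one kernel-verified Lean document; each statement's English description precedes it below -/
import Mathlib

section
/- If an m×n grid (with m ≥ 2) admits a non-attacking tree configuration with exactly r trees in each row, then n ≥ 4r − 1. -/
def ParksAdj (p q : ℕ × ℕ) : Prop :=
  p ≠ q ∧ ((p.1 : ℤ) - q.1).natAbs ≤ 1 ∧ ((p.2 : ℤ) - q.2).natAbs ≤ 1

/-- If an m×n grid with m ≥ 2 admits a non-attacking configuration with exactly `r`
trees in each row, then n ≥ 4r − 1 (stated as 4r ≤ n + 1). -/
theorem stmt_1 (m n r : ℕ) (hm : 2 ≤ m) (T : Finset (ℕ × ℕ))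
    (hgrid : ∀ p ∈ T, p.1 < m ∧ p.2 < n)
    (hrow : ∀ i < m, (T.filter (fun p => p.1 = i)).card = r)
    (hna : ∀ p ∈ T, ∀ q ∈ T, ¬ ParksAdj p q) :
    4 * r ≤ n + 1 := by
  classical
  -- key: distinct trees in rows < 2 have columns at distance ≥ 2
  have key : ∀ p ∈ T, ∀ q ∈ T, p.1 < 2 → q.1 < 2 → p ≠ q →
      2 ≤ ((p.2 : ℤ) - q.2).natAbs := by
    intro p hp q hq hp1 hq1 hne
    by_contra h
    exact hna p hp q hq ⟨hne, by omega, by omega⟩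
  set F : Finset (ℕ × ℕ) := T.filter (fun p => p.1 < 2) with hF
  have hFcard : F.card = 2 * r := by
    have hsplit : F = T.filter (fun p => p.1 = 0) ∪ T.filter (fun p => p.1 = 1) := by
      rw [← Finset.filter_or]
      apply Finset.filter_congr
      intro p _
      constructor <;> intro h <;> omega
    have hdisj : Disjoint (T.filter (fun p => p.1 = 0)) (T.filter (fun p => p.1 = 1)) := by
      simp only [Finset.disjoint_left, Finset.mem_filter]
      rintro p ⟨_, h0⟩ ⟨_, h1⟩
      omega
    rw [hsplit, Finset.card_union_of_disjoint hdisj, hrow 0 (by omega), hrow 1 (by omega)]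
    ring
  set S : Finset ℕ := F.image Prod.snd with hSdef
  have hScard : S.card = 2 * r := by
    rw [hSdef, Finset.card_image_of_injOn, hFcard]
    intro p hp q hq hpq
    simp only [hF, Finset.mem_coe, Finset.mem_filter] at hp hq
    by_contra hne
    have := key p hp.1 q hq.1 hp.2 hq.2 hne
    omega
  have hSgap : ∀ a ∈ S, ∀ b ∈ S, a ≠ b → 2 ≤ max a b - min a b := by
    intro a ha b hb hab
    simp only [hSdef, Finset.mem_image, hF, Finset.mem_filter] at ha hb
    obtain ⟨p, ⟨hpT, hp2⟩, hpa⟩ := ha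
    obtain ⟨q, ⟨hqT, hq2⟩, hqb⟩ := hb
    have hne : p ≠ q := by rintro rfl; exact hab (hpa ▸ hqb ▸ rfl)
    have := key p hpT q hqT hp2 hq2 hne
    omega
  have hSn : ∀ a ∈ S, a < n := by
    intro a ha
    simp only [hSdef, Finset.mem_image, hF, Finset.mem_filter] at ha
    obtain ⟨p, ⟨hpT, _⟩, hpa⟩ := ha
    exact hpa ▸ (hgrid p hpT).2
  set S' : Finset ℕ := S ∪ S.image (· + 1) with hS'
  have hS'card : S'.card = 4 * r := by
    have hdisj : Disjoint S (S.image (· + 1)) := by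
      simp only [Finset.disjoint_left, Finset.mem_image]
      rintro a ha ⟨b, hb, rfl⟩
      have := hSgap _ ha _ hb (by omega)
      omega
    rw [hS', Finset.card_union_of_disjoint hdisj,
      Finset.card_image_of_injective _ (add_left_injective 1), hScard]
    ring
  have hsub : S' ⊆ Finset.range (n + 1) := by
    intro a ha
    simp only [hS', Finset.mem_union, Finset.mem_image] at ha
    rw [Finset.mem_range]
    rcases ha with ha | ⟨b, hb, rfl⟩
    · exact lt_trans (hSn a ha) (by omega)
    · have := hSn b hb; omega
  have := Finset.card_le_card hsub
  rw [hS'card, Finset.card_range] at this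
  exact this
end

section
/- If an m×n grid with m ≥ 2 admits a non-attacking tree configuration with exactly c trees in each column and exactly r trees in each row, then n ≥ 4r. -/
open Finset

/-!
Two adjacent rows carry `2r` trees, and no two of them may share a column or sit in
neighbouring columns, so their columns form a `2r`-element set without consecutive
elements; in particular `n ≥ 2`. Since every column holds the same number of trees,
column `1` holds one. In the two rows around it column `1` is used, so column `0` is not,
and `2r` pairwise non-consecutive columns inside `[1, n)` force `4r ≤ n`.
-/

lemma two_mul_card_le_of_add_one_notMem {C : Finset ℕ} {a b : ℕ} (hC : C ⊆ Ico a b)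
    (hsep : ∀ x ∈ C, x + 1 ∉ C) : 2 * #C ≤ b + 1 - a := by
  have hdisj : Disjoint C (C.image (· + 1)) := by
    rw [disjoint_right]
    intro _ hy hyC
    obtain ⟨x, hx, rfl⟩ := mem_image.mp hy
    exact hsep x hx hyC
  have hsub : C ∪ C.image (· + 1) ⊆ Ico a (b + 1) := by
    intro y hy
    rcases mem_union.mp hy with hy | hy
    · have := mem_Ico.mp (hC hy)
      exact mem_Ico.mpr (by omega)
    · obtain ⟨x, hx, rfl⟩ := mem_image.mp hy
      have := mem_Ico.mp (hC hx)
      exact mem_Ico.mpr (by omega)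
  calc 2 * #C = #(C ∪ C.image (· + 1)) := by
        rw [card_union_of_disjoint hdisj, card_image_of_injective _ (add_left_injective 1)]
        ring
    _ ≤ b + 1 - a := by simpa using card_le_card hsub

lemma exists_mem_col_of_card_col_eq {T : Finset (ℕ × ℕ)} {n c : ℕ}
    (hcol : ∀ j < n, #(T.filter (fun p => p.2 = j)) = c) {t : ℕ × ℕ} (ht : t ∈ T)
    (htn : t.2 < n) {j : ℕ} (hj : j < n) : ∃ p ∈ T, p.2 = j := by
  have : 0 < #(T.filter (fun p => p.2 = j)) := by
    rw [hcol j hj, ← hcol t.2 htn]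
    exact card_pos.mpr ⟨t, mem_filter.mpr ⟨ht, rfl⟩⟩
  obtain ⟨p, hp⟩ := card_pos.mp this
  exact ⟨p, (mem_filter.mp hp).1, (mem_filter.mp hp).2⟩

def twoRows (T : Finset (ℕ × ℕ)) (i : ℕ) : Finset (ℕ × ℕ) :=
  T.filter (fun p => p.1 = i ∨ p.1 = i + 1)

section TwoRows

variable {T : Finset (ℕ × ℕ)} {i : ℕ}

lemma exists_twoRows_mem {m : ℕ} (hm : 2 ≤ m) {t : ℕ × ℕ} (ht : t ∈ T) (htm : t.1 < m) :
    ∃ i, i + 1 < m ∧ t ∈ twoRows T i :=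
  ⟨min t.1 (m - 2), by omega, mem_filter.mpr ⟨ht, by omega⟩⟩

lemma card_twoRows {m r : ℕ} (hrow : ∀ i < m, #(T.filter (fun p => p.1 = i)) = r)
    (hi : i + 1 < m) : #(twoRows T i) = 2 * r := by
  rw [twoRows, filter_or, card_union_of_disjoint, hrow i (by omega), hrow (i + 1) hi, two_mul]
  exact disjoint_filter.mpr fun _ _ h => by omega

lemma image_snd_twoRows_subset {n : ℕ} (hgrid : ∀ p ∈ T, p.2 < n) :
    (twoRows T i).image Prod.snd ⊆ Ico 0 n := fun x hx => by
  obtain ⟨p, hp, rfl⟩ := mem_image.mp hx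
  exact mem_Ico.mpr ⟨Nat.zero_le _, hgrid p (mem_filter.mp hp).1⟩

lemma col_sep_twoRows (hna : ∀ p ∈ T, ∀ q ∈ T, ¬ ParksAdj p q) {p q : ℕ × ℕ} (hp : p ∈ twoRows T i) (hq : q ∈ twoRows T i)
    (hpq : p ≠ q) : ¬ ((p.2 : ℤ) - q.2).natAbs ≤ 1 := fun hcol =>
  hna p (mem_filter.mp hp).1 q (mem_filter.mp hq).1
    ⟨hpq, by have := (mem_filter.mp hp).2; have := (mem_filter.mp hq).2; omega, hcol⟩

lemma card_image_snd_twoRows (hna : ∀ p ∈ T, ∀ q ∈ T, ¬ ParksAdj p q) :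
    #((twoRows T i).image Prod.snd) = #(twoRows T i) :=
  card_image_of_injOn fun p hp q hq h => by
    by_contra hpq
    exact col_sep_twoRows hna hp hq hpq (by simp [h])

lemma add_one_notMem_image_snd_twoRows (hna : ∀ p ∈ T, ∀ q ∈ T, ¬ ParksAdj p q) :
    ∀ x ∈ (twoRows T i).image Prod.snd, x + 1 ∉ (twoRows T i).image Prod.snd := by
  intro x hx hx1
  obtain ⟨p, hp, rfl⟩ := mem_image.mp hx
  obtain ⟨q, hq, hq2⟩ := mem_image.mp hx1
  exact col_sep_twoRows hna hp hq (fun h => by rw [h] at hq2; omega) (by omega)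

end TwoRows

/-- If an m×n grid with m ≥ 2 admits a non-attacking configuration with exactly `c`
trees per column and `r` trees per row (r ≥ 1), then n ≥ 4r. -/
theorem stmt_2 (m n c r : ℕ) (hm : 2 ≤ m) (hr : 1 ≤ r) (T : Finset (ℕ × ℕ))
    (hgrid : ∀ p ∈ T, p.1 < m ∧ p.2 < n)
    (hrow : ∀ i < m, (T.filter (fun p => p.1 = i)).card = r)
    (hcol : ∀ j < n, (T.filter (fun p => p.2 = j)).card = c)
    (hna : ∀ p ∈ T, ∀ q ∈ T, ¬ ParksAdj p q) :
    4 * r ≤ n := by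
  have hcols_sub {i : ℕ} := image_snd_twoRows_subset (i := i) fun p hp => (hgrid p hp).2
  have hcard {i : ℕ} (hi : i + 1 < m) : #((twoRows T i).image Prod.snd) = 2 * r := by
    rw [card_image_snd_twoRows hna, card_twoRows hrow hi]
  have hn : 2 ≤ n := by
    have := two_mul_card_le_of_add_one_notMem (hcols_sub (i := 0))
      (add_one_notMem_image_snd_twoRows hna)
    rw [hcard (by omega)] at this
    omega
  obtain ⟨t₀, ht₀⟩ := card_pos.mp (show 0 < #(T.filter (fun p => p.1 = 0)) by
    rw [hrow 0 (by omega)]; omega)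
  have ht₀T := (mem_filter.mp ht₀).1
  obtain ⟨t₁, ht₁T, ht₁col⟩ :=
    exists_mem_col_of_card_col_eq hcol ht₀T (hgrid t₀ ht₀T).2 (j := 1) hn
  obtain ⟨i, hi, ht₁i⟩ := exists_twoRows_mem hm ht₁T (hgrid t₁ ht₁T).1
  have hsep := add_one_notMem_image_snd_twoRows hna (i := i)
  have h1 : 1 ∈ (twoRows T i).image Prod.snd := mem_image.mpr ⟨t₁, ht₁i, ht₁col⟩
  have hsub : (twoRows T i).image Prod.snd ⊆ Ico 1 n := fun x hx => by
    have := mem_Ico.mp (hcols_sub hx)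
    have : x ≠ 0 := by rintro rfl; exact hsep 0 hx h1
    exact mem_Ico.mpr (by omega)
  have := two_mul_card_le_of_add_one_notMem hsub hsep
  rw [hcard hi] at this
  omega
end

section
/- A 4c×4r grid tiled by 2c×2r many 2×2 blocks: any non-attacking tree configuration with exactly c trees per column and exactly r trees per row contains exactly one tree in each 2×2 block. -/
/-- On the 4c×4r grid (partitioned into 2×2 blocks), any non-attacking configuration
with exactly `c` trees per column and `r` trees per row has exactly one tree in each
2×2 block.  The block with indices (bi, bj) consists of the cells p with
p.1 / 2 = bi and p.2 / 2 = bj. -/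
theorem stmt_4 (c r : ℕ) (hc : 0 < c) (hr : 0 < r) (T : Finset (ℕ × ℕ))
    (hgrid : ∀ p ∈ T, p.1 < 4 * c ∧ p.2 < 4 * r)
    (hrow : ∀ i < 4 * c, (T.filter (fun p => p.1 = i)).card = r)
    (hcol : ∀ j < 4 * r, (T.filter (fun p => p.2 = j)).card = c)
    (hna : ∀ p ∈ T, ∀ q ∈ T, ¬ ParksAdj p q) :
    ∀ bi < 2 * c, ∀ bj < 2 * r,
      (T.filter (fun p => p.1 / 2 = bi ∧ p.2 / 2 = bj)).card = 1 := by
  intro bi hbi bj hbj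
  classical
  set t : Finset (ℕ × ℕ) := (Finset.range (2 * c)) ×ˢ (Finset.range (2 * r)) with ht
  have hmap : ∀ p ∈ T, (p.1 / 2, p.2 / 2) ∈ t := by
    intro p hp
    obtain ⟨h1, h2⟩ := hgrid p hp
    simp only [ht, Finset.mem_product, Finset.mem_range]
    omega
  have hcardT : T.card = ∑ b ∈ t, (T.filter (fun p => (p.1 / 2, p.2 / 2) = b)).card :=
    Finset.card_eq_sum_card_fiberwise hmap
  have hrowsum : T.card = 4 * c * r := by
    have h := Finset.card_eq_sum_card_fiberwise
      (f := fun p : ℕ × ℕ => p.1) (t := Finset.range (4 * c)) (s := T)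
      (fun p hp => Finset.mem_range.mpr (hgrid p hp).1)
    rw [h, Finset.sum_congr rfl (fun i hi => hrow i (Finset.mem_range.mp hi))]
    simp [mul_comm]
  have hle : ∀ b ∈ t, (T.filter (fun p => (p.1 / 2, p.2 / 2) = b)).card ≤ 1 := by
    rintro ⟨b1, b2⟩ _
    by_contra h
    push_neg at h
    obtain ⟨p, hp, q, hq, hpq⟩ := Finset.one_lt_card.mp h
    simp only [Finset.mem_filter, Prod.mk.injEq] at hp hq
    refine hna p hp.1 q hq.1 ⟨hpq, ?_, ?_⟩
    · have h1 := hp.2.1; have h2 := hq.2.1; omega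
    · have h1 := hp.2.2; have h2 := hq.2.2; omega
  have htcard : t.card = 4 * c * r := by
    simp [ht, Finset.card_product]; ring
  have heach : (T.filter (fun p => (p.1 / 2, p.2 / 2) = (bi, bj))).card = 1 := by
    by_contra hne
    have hmem : (bi, bj) ∈ t := by
      simp [ht, Finset.mem_product]; omega
    have hlt : (T.filter (fun p => (p.1 / 2, p.2 / 2) = (bi, bj))).card < 1 := by
      have := hle (bi, bj) hmem; omega
    have : (∑ b ∈ t, (T.filter (fun p => (p.1 / 2, p.2 / 2) = b)).card) < ∑ _b ∈ t, 1 :=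
      Finset.sum_lt_sum hle ⟨(bi, bj), hmem, hlt⟩
    rw [Finset.sum_const, smul_eq_mul, mul_one, htcard, ← hcardT, hrowsum] at this
    omega
  rw [← heach]
  congr 1
  ext p
  simp [Prod.ext_iff]
end

section
/- There are exactly 2 non-attacking tree configurations on the 4c×4r grid with exactly c trees per column and r trees per row, for all positive integers c and r. -/
/-- A valid (c,r)-tree configuration on the 4c×4r grid: non-attacking, c trees per
column, r trees per row. -/
def ValidConfig (c r : ℕ) (T : Finset (ℕ × ℕ)) : Prop :=
  (∀ p ∈ T, p.1 < 4 * c ∧ p.2 < 4 * r) ∧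
  (∀ i < 4 * c, (T.filter (fun p => p.1 = i)).card = r) ∧
  (∀ j < 4 * r, (T.filter (fun p => p.2 = j)).card = c) ∧
  (∀ p ∈ T, ∀ q ∈ T, ¬ ParksAdj p q)

open Finset

def HasDescent (S : Finset ℕ) (n : ℕ) : Prop := ∃ v, v + 1 < n ∧ v ∈ S ∧ v + 1 ∉ S

def HasAscent (S : Finset ℕ) (n : ℕ) : Prop := ∃ v, v + 1 < n ∧ v ∉ S ∧ v + 1 ∈ S

section

variable {S R : Finset ℕ} {k m n : ℕ}

lemma eq_Ico_of_not_hasDescent (hS : S ⊆ range n) (h : ¬HasDescent S n) :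
    S = Ico (n - #S) n := by
  have hup : ∀ v ∈ S, Ico v n ⊆ S := by
    intro v hv w hw
    rw [mem_Ico] at hw
    induction w, hw.1 using Nat.le_induction with
    | base => exact hv
    | succ w hvw ih => exact not_not.1 fun hw' => h ⟨w, hw.2, ih ⟨hvw, by omega⟩, hw'⟩
  have hSn : #S ≤ n := by simpa using card_le_card hS
  refine eq_of_subset_of_card_le (fun v hv => ?_) (by rw [Nat.card_Ico]; omega)
  have hvn := mem_range.1 (hS hv)
  have := card_le_card (hup v hv)
  rw [Nat.card_Ico] at this
  rw [mem_Ico]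
  omega

lemma eq_range_of_not_hasAscent (hS : S ⊆ range n) (h : ¬HasAscent S n) :
    S = range #S := by
  have hdown : ∀ v ∈ S, range (v + 1) ⊆ S := by
    intro v hv w hw
    have hvn := mem_range.1 (hS hv)
    refine Nat.decreasingInduction (motive := fun w _ => w ∈ S) (fun w hwv ih => ?_) hv
      (Nat.lt_succ_iff.1 (mem_range.1 hw))
    exact not_not.1 fun hw' => h ⟨w, by omega, hw', ih⟩
  refine eq_of_subset_of_card_le (fun v hv => ?_) (by simp)
  have := card_le_card (hdown v hv)
  rw [card_range] at this
  rw [mem_range]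
  omega

lemma hasAscent_Ico (hk : 0 < k) (hkn : k < n) : HasAscent (Ico k n) n :=
  ⟨k - 1, by omega, by simp only [mem_Ico]; omega, by simp only [mem_Ico]; omega⟩

lemma not_hasDescent_Ico : ¬HasDescent (Ico k n) n := by
  rintro ⟨v, hvn, hv, hv'⟩
  simp only [mem_Ico] at hv hv'
  omega

lemma not_hasAscent_range : ¬HasAscent (range k) n := by
  rintro ⟨v, -, hv, hv'⟩
  simp only [mem_range] at hv hv'
  omega

lemma eq_Ico_and_eq_range_of_not_hasDescent (hS : S ⊆ range m) (hS₀ : 0 < #S) (hSm : #S < m)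
    (hR : R ⊆ range n) (hasc : ¬(HasAscent S m ∧ HasAscent R n)) (hdesc : ¬HasDescent S m) :
    S = Ico (m - #S) m ∧ R = range #R := by
  have hSIco := eq_Ico_of_not_hasDescent hS hdesc
  refine ⟨hSIco, eq_range_of_not_hasAscent hR fun hRasc => hasc ⟨?_, hRasc⟩⟩
  rw [hSIco]
  exact hasAscent_Ico (by omega) (by omega)

theorem eq_Ico_and_eq_range_or_eq_range_and_eq_Ico (hS : S ⊆ range m) (hS₀ : 0 < #S)
    (hSm : #S < m) (hR : R ⊆ range n) (hR₀ : 0 < #R) (hRn : #R < n)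
    (hdesc : ¬(HasDescent S m ∧ HasDescent R n)) (hasc : ¬(HasAscent S m ∧ HasAscent R n)) :
    (S = Ico (m - #S) m ∧ R = range #R) ∨ (S = range #S ∧ R = Ico (n - #R) n) := by
  by_cases hSdesc : HasDescent S m
  · exact .inr (eq_Ico_and_eq_range_of_not_hasDescent hR hR₀ hRn hS (fun h => hasc h.symm)
      fun hRdesc => hdesc ⟨hSdesc, hRdesc⟩).symm
  · exact .inl (eq_Ico_and_eq_range_of_not_hasDescent hS hS₀ hSm hR hasc hSdesc)

end

lemma parksAdj_comm {p q : ℕ × ℕ} (h : ParksAdj p q) : ParksAdj q p := by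
  obtain ⟨hne, h₁, h₂⟩ := h
  exact ⟨hne.symm, by omega, by omega⟩

lemma parksAdj_swap {p q : ℕ × ℕ} : ParksAdj p.swap q.swap ↔ ParksAdj p q := by
  simp only [ParksAdj, Prod.fst_swap, Prod.snd_swap, Ne, Prod.swap_inj]
  tauto

lemma card_filter_fst_image_swap (T : Finset (ℕ × ℕ)) (i : ℕ) :
    #((T.image Prod.swap).filter (·.1 = i)) = #(T.filter (·.2 = i)) := by
  rw [filter_image, card_image_of_injective _ Prod.swap_injective]
  rfl

lemma card_filter_snd_image_swap (T : Finset (ℕ × ℕ)) (j : ℕ) :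
    #((T.image Prod.swap).filter (·.2 = j)) = #(T.filter (·.1 = j)) := by
  rw [filter_image, card_image_of_injective _ Prod.swap_injective]
  rfl

/-- The grid is tiled by `2 × 2` blocks, block `(u, v)` covering rows `2u, 2u+1` and columns
`2v, 2v+1`; this configuration puts one tree in each block, in its odd row iff `v ∈ S` and in
its odd column iff `u ∈ R`. -/
def blockConfig (c r : ℕ) (S R : Finset ℕ) : Finset (ℕ × ℕ) :=
  (range (4 * c) ×ˢ range (4 * r)).filter fun p =>
    (p.1 % 2 = 1 ↔ p.2 / 2 ∈ S) ∧ (p.2 % 2 = 1 ↔ p.1 / 2 ∈ R)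

section blockConfig

variable {c r : ℕ} {S R : Finset ℕ}

lemma mem_blockConfig {p : ℕ × ℕ} :
    p ∈ blockConfig c r S R ↔
      (p.1 < 4 * c ∧ p.2 < 4 * r) ∧ (p.1 % 2 = 1 ↔ p.2 / 2 ∈ S) ∧ (p.2 % 2 = 1 ↔ p.1 / 2 ∈ R) := by
  simp [blockConfig]

lemma mk_mem_blockConfig_iff {u v a b : ℕ} (ha : a < 2) (hb : b < 2) :
    (2 * u + a, 2 * v + b) ∈ blockConfig c r S R ↔
      (u < 2 * c ∧ v < 2 * r) ∧ (a = 1 ↔ v ∈ S) ∧ (b = 1 ↔ u ∈ R) := by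
  rw [mem_blockConfig]
  simp only [show (2 * u + a) % 2 = a by omega, show (2 * u + a) / 2 = u by omega,
    show (2 * v + b) % 2 = b by omega, show (2 * v + b) / 2 = v by omega,
    show 2 * u + a < 4 * c ↔ u < 2 * c by omega, show 2 * v + b < 4 * r ↔ v < 2 * r by omega]

lemma image_swap_blockConfig : (blockConfig c r S R).image Prod.swap = blockConfig r c R S := by
  ext ⟨x, y⟩
  simp only [mem_image, Prod.exists, Prod.swap_prod_mk, Prod.mk.injEq, mem_blockConfig]
  constructor
  · rintro ⟨y, x, h, rfl, rfl⟩
    tauto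
  · intro h
    exact ⟨y, x, by tauto, rfl, rfl⟩

lemma eq_of_mem_blockConfig_of_fst_div_two_eq {p q : ℕ × ℕ} (hp : p ∈ blockConfig c r S R)
    (hq : q ∈ blockConfig c r S R) (h₁ : p.1 / 2 = q.1 / 2) (h₂ : ((p.2 : ℤ) - q.2).natAbs ≤ 1) :
    p = q := by
  obtain ⟨-, hp₁, hp₂⟩ := mem_blockConfig.1 hp
  obtain ⟨-, hq₁, hq₂⟩ := mem_blockConfig.1 hq
  rw [h₁, ← hq₂] at hp₂
  have hy : p.2 = q.2 := by omega
  rw [hy, ← hq₁] at hp₁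
  exact Prod.ext (by omega) hy

lemma card_blockConfig_le : #(blockConfig c r S R) ≤ 4 * c * r := by
  have hinj : Set.InjOn (fun p : ℕ × ℕ => (p.1 / 2, p.2 / 2)) (blockConfig c r S R) := by
    intro p hp q hq hpq
    simp only [Prod.mk.injEq] at hpq
    exact eq_of_mem_blockConfig_of_fst_div_two_eq hp hq hpq.1 (by omega)
  calc #(blockConfig c r S R)
      = #((blockConfig c r S R).image fun p => (p.1 / 2, p.2 / 2)) :=
        (card_image_of_injOn hinj).symm
    _ ≤ #(range (2 * c) ×ˢ range (2 * r)) := card_le_card fun x hx => by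
        obtain ⟨p, hp, rfl⟩ := mem_image.1 hx
        have := (mem_blockConfig.1 hp).1
        simp only [mem_product, mem_range]
        omega
    _ = 4 * c * r := by rw [card_product, card_range, card_range]; ring

/-- Trees of distinct blocks can only attack each other across a common block corner, which
takes a simultaneous descent or a simultaneous ascent of `S` and `R`. -/
lemma not_parksAdj_of_mem_blockConfig (hdesc : ¬(HasDescent S (2 * r) ∧ HasDescent R (2 * c)))
    (hasc : ¬(HasAscent S (2 * r) ∧ HasAscent R (2 * c))) {p q : ℕ × ℕ}
    (hp : p ∈ blockConfig c r S R) (hq : q ∈ blockConfig c r S R) : ¬ParksAdj p q := by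
  intro hadj
  wlog hpq : p.1 < q.1 generalizing p q
  · rcases lt_or_eq_of_le (not_lt.1 hpq) with hlt | heq
    · exact this hq hp (parksAdj_comm hadj) hlt
    · exact hadj.1 (eq_of_mem_blockConfig_of_fst_div_two_eq hp hq (by omega) hadj.2.2)
  obtain ⟨hne, hx, hy⟩ := hadj
  have hx₂ : p.1 / 2 ≠ q.1 / 2 := fun h => hne (eq_of_mem_blockConfig_of_fst_div_two_eq hp hq h hy)
  have hy₂ : p.2 / 2 ≠ q.2 / 2 := by
    have hp' := image_swap_blockConfig ▸ mem_image_of_mem Prod.swap hp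
    have hq' := image_swap_blockConfig ▸ mem_image_of_mem Prod.swap hq
    exact fun h => hne (Prod.swap_injective (eq_of_mem_blockConfig_of_fst_div_two_eq hp' hq' h hx))
  obtain ⟨x, y⟩ := p
  obtain ⟨x', y'⟩ := q
  dsimp only at hpq hx hy hx₂ hy₂
  obtain ⟨u, rfl, rfl⟩ : ∃ u, x = 2 * u + 1 ∧ x' = 2 * (u + 1) + 0 := ⟨x / 2, by omega, by omega⟩
  rcases Nat.lt_or_gt_of_ne (show y ≠ y' by omega) with hlt | hlt
  · obtain ⟨v, rfl, rfl⟩ : ∃ v, y = 2 * v + 1 ∧ y' = 2 * (v + 1) + 0 := ⟨y / 2, by omega, by omega⟩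
    rw [mk_mem_blockConfig_iff (by norm_num) (by norm_num)] at hp hq
    exact hdesc ⟨⟨v, by omega, by simpa using hp.2.1, by simpa using hq.2.1⟩,
      ⟨u, by omega, by simpa using hp.2.2, by simpa using hq.2.2⟩⟩
  · obtain ⟨v, rfl, rfl⟩ : ∃ v, y = 2 * (v + 1) + 0 ∧ y' = 2 * v + 1 := ⟨y' / 2, by omega, by omega⟩
    rw [mk_mem_blockConfig_iff (by norm_num) (by norm_num)] at hp hq
    exact hasc ⟨⟨v, by omega, by simpa using hq.2.1, by simpa using hp.2.1⟩,
      ⟨u, by omega, by simpa using hp.2.2, by simpa using hq.2.2⟩⟩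

theorem forall_not_parksAdj_blockConfig_iff :
    (∀ p ∈ blockConfig c r S R, ∀ q ∈ blockConfig c r S R, ¬ParksAdj p q) ↔
      ¬(HasDescent S (2 * r) ∧ HasDescent R (2 * c)) ∧
        ¬(HasAscent S (2 * r) ∧ HasAscent R (2 * c)) := by
  refine ⟨fun h => ⟨?_, ?_⟩, fun ⟨hdesc, hasc⟩ p hp q hq =>
    not_parksAdj_of_mem_blockConfig hdesc hasc hp hq⟩
  · rintro ⟨⟨v, hv, hvS, hvS'⟩, ⟨u, hu, huR, huR'⟩⟩
    refine h (2 * u + 1, 2 * v + 1) ?_ (2 * (u + 1) + 0, 2 * (v + 1) + 0) ?_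
      ⟨by simp only [ne_eq, Prod.mk.injEq]; omega, by omega, by omega⟩
    · rw [mk_mem_blockConfig_iff (by norm_num) (by norm_num)]
      exact ⟨⟨by omega, by omega⟩, by simp [hvS], by simp [huR]⟩
    · rw [mk_mem_blockConfig_iff (by norm_num) (by norm_num)]
      exact ⟨⟨hu, hv⟩, by simp [hvS'], by simp [huR']⟩
  · rintro ⟨⟨v, hv, hvS, hvS'⟩, ⟨u, hu, huR, huR'⟩⟩
    refine h (2 * u + 1, 2 * (v + 1) + 0) ?_ (2 * (u + 1) + 0, 2 * v + 1) ?_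
      ⟨by simp only [ne_eq, Prod.mk.injEq]; omega, by omega, by omega⟩
    · rw [mk_mem_blockConfig_iff (by norm_num) (by norm_num)]
      exact ⟨⟨by omega, hv⟩, by simp [hvS'], by simp [huR]⟩
    · rw [mk_mem_blockConfig_iff (by norm_num) (by norm_num)]
      exact ⟨⟨hu, by omega⟩, by simp [hvS], by simp [huR']⟩

lemma card_filter_fst_blockConfig (hS : S ⊆ range (2 * r)) (hSc : #S = r) {i : ℕ}
    (hi : i < 4 * c) : #((blockConfig c r S R).filter (·.1 = i)) = r := by
  have hcount : #((range (2 * r)).filter fun v => i % 2 = 1 ↔ v ∈ S) = r := by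
    by_cases hodd : i % 2 = 1
    · simp only [hodd, true_iff, filter_mem_eq_inter, inter_eq_right.2 hS, hSc]
    · simp only [hodd, false_iff, filter_not, filter_mem_eq_inter, inter_eq_right.2 hS,
        card_sdiff_of_subset hS, card_range, hSc]
      omega
  rw [← hcount]
  obtain ⟨b, hb, hbR⟩ : ∃ b < 2, (b = 1 ↔ i / 2 ∈ R) := by
    by_cases h : i / 2 ∈ R
    exacts [⟨1, by simp [h]⟩, ⟨0, by simp [h]⟩]
  refine card_nbij' (·.2 / 2) (fun v => (i, 2 * v + b)) (fun p hp => ?_) (fun v hv => ?_)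
    (fun p hp => ?_) (fun v _ => show (2 * v + b) / 2 = v by omega)
  · simp only [coe_filter, mem_blockConfig, Set.mem_ofPred_eq, mem_range] at hp ⊢
    obtain ⟨⟨⟨-, hy⟩, hpS, -⟩, rfl⟩ := hp
    exact ⟨by omega, hpS⟩
  · simp only [coe_filter, mem_blockConfig, Set.mem_ofPred_eq, mem_range] at hv ⊢
    rw [show (2 * v + b) / 2 = v by omega, show (2 * v + b) % 2 = b by omega]
    exact ⟨⟨⟨hi, by omega⟩, hv.2, hbR⟩, trivial⟩
  · simp only [coe_filter, mem_blockConfig, Set.mem_ofPred_eq] at hp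
    obtain ⟨⟨-, -, hpR⟩, rfl⟩ := hp
    rw [← hbR] at hpR
    exact Prod.ext rfl (show 2 * (p.2 / 2) + b = p.2 by omega)

end blockConfig

theorem validConfig_blockConfig_iff {c r : ℕ} {S R : Finset ℕ} (hS : S ⊆ range (2 * r))
    (hSc : #S = r) (hR : R ⊆ range (2 * c)) (hRc : #R = c) :
    ValidConfig c r (blockConfig c r S R) ↔
      ¬(HasDescent S (2 * r) ∧ HasDescent R (2 * c)) ∧
        ¬(HasAscent S (2 * r) ∧ HasAscent R (2 * c)) := by
  rw [← forall_not_parksAdj_blockConfig_iff]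
  refine ⟨fun h => h.2.2.2, fun h => ⟨fun p hp => (mem_blockConfig.1 hp).1,
    fun i hi => card_filter_fst_blockConfig hS hSc hi, fun j hj => ?_, h⟩⟩
  rw [← card_filter_fst_image_swap, image_swap_blockConfig]
  exact card_filter_fst_blockConfig hR hRc hj

def oddRowBlocks (T : Finset (ℕ × ℕ)) (u : ℕ) : Finset ℕ :=
  (T.filter (·.1 = 2 * u + 1)).image (·.2 / 2)

namespace ValidConfig

variable {c r u : ℕ} {T : Finset (ℕ × ℕ)}

lemma image_swap (h : ValidConfig c r T) : ValidConfig r c (T.image Prod.swap) := by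
  obtain ⟨hbound, hrow, hcol, hadj⟩ := h
  refine ⟨forall_mem_image.2 fun p hp => (hbound p hp).symm, fun i hi => ?_, fun j hj => ?_,
    forall_mem_image.2 fun p hp => forall_mem_image.2 fun q hq => ?_⟩
  · rw [card_filter_fst_image_swap]
    exact hcol i hi
  · rw [card_filter_snd_image_swap]
    exact hrow j hj
  · rw [parksAdj_swap]
    exact hadj p hp q hq

lemma card_eq (h : ValidConfig c r T) : #T = 4 * c * r := by
  rw [card_eq_sum_card_fiberwise (f := Prod.fst) (t := range (4 * c))
      fun p hp => mem_range.2 (h.1 p hp).1,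
    sum_congr rfl fun i hi => h.2.1 i (mem_range.1 hi), sum_const, card_range, smul_eq_mul]

lemma eq_of_div_two_eq (h : ValidConfig c r T) {p q : ℕ × ℕ} (hp : p ∈ T) (hq : q ∈ T)
    (h₁ : p.1 / 2 = q.1 / 2) (h₂ : p.2 / 2 = q.2 / 2) : p = q :=
  not_not.1 fun hne => h.2.2.2 p hp q hq ⟨hne, by omega, by omega⟩

/-- Every `2 × 2` block holds exactly one tree: at most one since trees do not attack, and
the `4cr` trees fill the `4cr` blocks. -/
lemma exists_mem_block (h : ValidConfig c r T) {u v : ℕ} (hu : u < 2 * c)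
    (hv : v < 2 * r) : ∃ p ∈ T, p.1 / 2 = u ∧ p.2 / 2 = v := by
  have himage : T.image (fun p => (p.1 / 2, p.2 / 2)) = range (2 * c) ×ˢ range (2 * r) := by
    refine eq_of_subset_of_card_le (fun x hx => ?_) ?_
    · obtain ⟨p, hp, rfl⟩ := mem_image.1 hx
      have := h.1 p hp
      simp only [mem_product, mem_range]
      omega
    · rw [card_image_of_injOn fun p hp q hq hpq => h.eq_of_div_two_eq hp hq
        (congrArg Prod.fst hpq) (congrArg Prod.snd hpq), h.card_eq, card_product,
        card_range, card_range]
      exact (by ring : 2 * c * (2 * r) = 4 * c * r).le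
  have huv : (u, v) ∈ T.image (fun p => (p.1 / 2, p.2 / 2)) := by simp [himage, hu, hv]
  obtain ⟨p, hp, hpuv⟩ := mem_image.1 huv
  exact ⟨p, hp, congrArg Prod.fst hpuv, congrArg Prod.snd hpuv⟩

lemma card_oddRowBlocks (h : ValidConfig c r T) (hu : u < 2 * c) : #(oddRowBlocks T u) = r := by
  rw [oddRowBlocks, card_image_of_injOn, h.2.1 _ (by omega)]
  intro p hp q hq hpq
  simp only [coe_filter, Set.mem_ofPred_eq] at hp hq
  exact h.eq_of_div_two_eq hp.1 hq.1 (by omega) hpq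

lemma mem_oddRowBlocks_iff (h : ValidConfig c r T) {p : ℕ × ℕ} (hp : p ∈ T) :
    p.2 / 2 ∈ oddRowBlocks T (p.1 / 2) ↔ p.1 % 2 = 1 := by
  simp only [oddRowBlocks, mem_image, mem_filter]
  constructor
  · rintro ⟨q, ⟨hq, hq₁⟩, hq₂⟩
    obtain rfl := h.eq_of_div_two_eq hq hp (by omega) hq₂
    omega
  · exact fun hodd => ⟨p, ⟨hp, by omega⟩, rfl⟩

/-- A tree in the odd row of its block forces the tree of the block below into its odd row too,
since otherwise the two would be vertically adjacent. -/
lemma oddRowBlocks_subset_succ (h : ValidConfig c r T) (hu : u + 1 < 2 * c) :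
    oddRowBlocks T u ⊆ oddRowBlocks T (u + 1) := by
  intro v hv
  obtain ⟨p, hp, rfl⟩ := mem_image.1 hv
  obtain ⟨hpT, hp₁⟩ := mem_filter.1 hp
  obtain ⟨q, hqT, hq₁, hq₂⟩ := h.exists_mem_block hu (v := p.2 / 2) (by
    have := h.1 p hpT
    omega)
  have hodd : q.1 % 2 = 1 := by
    by_contra heven
    exact h.2.2.2 p hpT q hqT ⟨fun hpq => by rw [hpq] at hp₁; omega, by omega, by omega⟩
  rw [← hq₂, ← hq₁]
  exact (h.mem_oddRowBlocks_iff hqT).2 hodd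

lemma oddRowBlocks_eq_zero (h : ValidConfig c r T) (hu : u < 2 * c) :
    oddRowBlocks T u = oddRowBlocks T 0 := by
  induction u with
  | zero => rfl
  | succ u ih =>
    rw [← ih (by omega)]
    exact (eq_of_subset_of_card_le (h.oddRowBlocks_subset_succ hu)
      (by rw [h.card_oddRowBlocks hu, h.card_oddRowBlocks (by omega)])).symm

lemma exists_odd_row_iff_mem (h : ValidConfig c r T) (hc : 0 < c) :
    ∃ S ⊆ range (2 * r), #S = r ∧ ∀ p ∈ T, (p.1 % 2 = 1 ↔ p.2 / 2 ∈ S) := by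
  refine ⟨oddRowBlocks T 0, fun v hv => ?_, h.card_oddRowBlocks (by omega), fun p hp => ?_⟩
  · obtain ⟨p, hp, rfl⟩ := mem_image.1 hv
    have := h.1 p (mem_filter.1 hp).1
    rw [mem_range]
    omega
  · have := h.1 p hp
    rw [← h.oddRowBlocks_eq_zero (u := p.1 / 2) (by omega), h.mem_oddRowBlocks_iff hp]

theorem exists_eq_blockConfig (h : ValidConfig c r T) (hc : 0 < c) (hr : 0 < r) :
    ∃ S R, S ⊆ range (2 * r) ∧ #S = r ∧ R ⊆ range (2 * c) ∧ #R = c ∧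
      T = blockConfig c r S R := by
  obtain ⟨S, hS, hSc, hSp⟩ := h.exists_odd_row_iff_mem hc
  obtain ⟨R, hR, hRc, hRp⟩ := h.image_swap.exists_odd_row_iff_mem hr
  refine ⟨S, R, hS, hSc, hR, hRc, eq_of_subset_of_card_le (fun p hp => ?_) ?_⟩
  · exact mem_blockConfig.2 ⟨h.1 p hp, hSp p hp, hRp p.swap (mem_image_of_mem _ hp)⟩
  · rw [h.card_eq]
    exact card_blockConfig_le

end ValidConfig

/-- For all positive integers c and r, there are exactly 2 non-attacking
configurations on the 4c×4r grid with exactly c trees per column and r per row. -/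
theorem stmt_6 (c r : ℕ) (hc : 0 < c) (hr : 0 < r) :
    ∃ T₁ T₂ : Finset (ℕ × ℕ), T₁ ≠ T₂ ∧
      ∀ T : Finset (ℕ × ℕ), ValidConfig c r T ↔ (T = T₁ ∨ T = T₂) := by
  have hIco (k : ℕ) : Ico k (2 * k) ⊆ range (2 * k) ∧ #(Ico k (2 * k)) = k :=
    ⟨fun v hv => by simp only [mem_Ico, mem_range] at hv ⊢; omega, by rw [Nat.card_Ico]; omega⟩
  have hrange (k : ℕ) : range k ⊆ range (2 * k) ∧ #(range k) = k :=
    ⟨range_subset_range.2 (by omega), card_range k⟩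
  refine ⟨blockConfig c r (Ico r (2 * r)) (range c), blockConfig c r (range r) (Ico c (2 * c)),
    fun h => ?_, fun T => ⟨fun hT => ?_, ?_⟩⟩
  · have h₀₁ : (2 * 0 + 0, 2 * 0 + 1) ∈ blockConfig c r (Ico r (2 * r)) (range c) := by
      rw [mk_mem_blockConfig_iff (by norm_num) (by norm_num), mem_Ico, mem_range]
      omega
    rw [h, mk_mem_blockConfig_iff (by norm_num) (by norm_num), mem_Ico, mem_range] at h₀₁
    omega
  · obtain ⟨S, R, hS, hSc, hR, hRc, rfl⟩ := hT.exists_eq_blockConfig hc hr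
    obtain ⟨hdesc, hasc⟩ := (validConfig_blockConfig_iff hS hSc hR hRc).1 hT
    rcases eq_Ico_and_eq_range_or_eq_range_and_eq_Ico hS (by omega) (by omega) hR (by omega)
      (by omega) hdesc hasc with ⟨hS', hR'⟩ | ⟨hS', hR'⟩
    · rw [hS', hR', hSc, hRc, show 2 * r - r = r by omega]
      exact .inl rfl
    · rw [hS', hR', hSc, hRc, show 2 * c - c = c by omega]
      exact .inr rfl
  · rintro (rfl | rfl)
    · rw [validConfig_blockConfig_iff (hIco r).1 (hIco r).2 (hrange c).1 (hrange c).2]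
      exact ⟨fun h => not_hasDescent_Ico h.1, fun h => not_hasAscent_range h.2⟩
    · rw [validConfig_blockConfig_iff (hrange r).1 (hrange r).2 (hIco c).1 (hIco c).2]
      exact ⟨fun h => not_hasDescent_Ico h.2, fun h => not_hasAscent_range h.1⟩
end

section
/- In any non-attacking configuration on the 4c×4r grid with c trees per column and r trees per row (partitioned into 2×2 blocks, each containing exactly one tree), if a block has its tree in the right column, then every block in the same block-row to its right also has its tree in the right column. -/
/-- On the 4c×4r grid partitioned into 2×2 blocks (block indices p.1/2 and p.2/2),
in a non-attacking configuration with c trees per column, r trees per row, and one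
tree per block: if the tree of some block lies in the block's right column
(odd cell-column), then the tree of every block to its right in the same block-row
also lies in the right column. -/
theorem stmt_15 (c r : ℕ) (hc : 0 < c) (hr : 0 < r) (T : Finset (ℕ × ℕ))
    (hgrid : ∀ p ∈ T, p.1 < 4 * c ∧ p.2 < 4 * r)
    (hrow : ∀ i < 4 * c, (T.filter (fun p => p.1 = i)).card = r)
    (hcol : ∀ j < 4 * r, (T.filter (fun p => p.2 = j)).card = c)
    (hna : ∀ p ∈ T, ∀ q ∈ T, ¬ ParksAdj p q)
    (hblock : ∀ bi < 2 * c, ∀ bj < 2 * r,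
      (T.filter (fun p => p.1 / 2 = bi ∧ p.2 / 2 = bj)).card = 1) :
    ∀ p ∈ T, p.2 % 2 = 1 → ∀ q ∈ T, q.1 / 2 = p.1 / 2 → p.2 / 2 < q.2 / 2 →
      q.2 % 2 = 1 := by
  intro p hp hpodd
  suffices H : ∀ n, ∀ q ∈ T, q.1 / 2 = p.1 / 2 → p.2 / 2 < q.2 / 2 → q.2 / 2 = n →
      q.2 % 2 = 1 by
    intro q hq h1 h2; exact H (q.2 / 2) q hq h1 h2 rfl
  intro n
  induction n using Nat.strong_induction_on with
  | _ n ih =>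
    intro q hq hq1 hq2 hqn
    have hn0 : p.2 / 2 < n := hqn ▸ hq2
    have hgp := hgrid p hp
    have hgq := hgrid q hq
    have hbi : p.1 / 2 < 2 * c := by omega
    have hbj : n - 1 < 2 * r := by omega
    have hcard := hblock (p.1 / 2) hbi (n - 1) hbj
    obtain ⟨x, hx⟩ := Finset.card_eq_one.mp hcard
    have hxmem : x ∈ T.filter (fun p' => p'.1 / 2 = p.1 / 2 ∧ p'.2 / 2 = n - 1) := by
      rw [hx]; exact Finset.mem_singleton_self x
    rw [Finset.mem_filter] at hxmem
    obtain ⟨hxT, hx1, hx2⟩ := hxmem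
    have hxodd : x.2 % 2 = 1 := by
      rcases Nat.lt_or_ge (p.2 / 2) (n - 1) with h | h
      · exact ih (n - 1) (by omega) x hxT hx1 (by omega) hx2
      · have hpn : p.2 / 2 = n - 1 := by omega
        have hpmem : p ∈ T.filter (fun p' => p'.1 / 2 = p.1 / 2 ∧ p'.2 / 2 = n - 1) :=
          Finset.mem_filter.mpr ⟨hp, rfl, hpn⟩
        rw [hx, Finset.mem_singleton] at hpmem
        rw [← hpmem]; exact hpodd
    have hadj := hna x hxT q hq
    by_contra hcon
    exact hadj ⟨by intro h; rw [h] at hx2; omega, by omega, by omega⟩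
end

section
/- In any non-attacking configuration on the 4c×4r grid with exactly one tree per 2×2 block, c trees per column, and r trees per row, exactly 2rc blocks have their tree in the left column and exactly 2rc blocks have their tree in the right column; moreover in each block-row either all blocks have trees in the left column or all in the right column. -/
/-- On the 4c×4r grid partitioned into 2×2 blocks, in a non-attacking configuration
with c trees per column, r trees per row, and exactly one tree per block: exactly
2rc blocks have their tree in the left column and exactly 2rc in the right column;
moreover in each block-row all trees are in left columns or all in right columns. -/
theorem stmt_16 (c r : ℕ) (hc : 0 < c) (hr : 0 < r) (T : Finset (ℕ × ℕ))
    (hgrid : ∀ p ∈ T, p.1 < 4 * c ∧ p.2 < 4 * r)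
    (hrow : ∀ i < 4 * c, (T.filter (fun p => p.1 = i)).card = r)
    (hcol : ∀ j < 4 * r, (T.filter (fun p => p.2 = j)).card = c)
    (hna : ∀ p ∈ T, ∀ q ∈ T, ¬ ParksAdj p q)
    (hblock : ∀ bi < 2 * c, ∀ bj < 2 * r,
      (T.filter (fun p => p.1 / 2 = bi ∧ p.2 / 2 = bj)).card = 1) :
    (T.filter (fun p => p.2 % 2 = 0)).card = 2 * r * c ∧
    (T.filter (fun p => p.2 % 2 = 1)).card = 2 * r * c ∧
    ∀ bi < 2 * c, (∀ p ∈ T, p.1 / 2 = bi → p.2 % 2 = 0) ∨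
      (∀ p ∈ T, p.1 / 2 = bi → p.2 % 2 = 1) := by
  classical
  -- uniqueness of the tree in each block
  have huniq : ∀ p ∈ T, ∀ q ∈ T, p.1 / 2 = q.1 / 2 → p.2 / 2 = q.2 / 2 → p = q := by
    intro p hp q hq h1 h2
    have hg1 := (hgrid p hp).1
    have hg2 := (hgrid p hp).2
    have hb := hblock (p.1 / 2) (by omega) (p.2 / 2) (by omega)
    exact Finset.card_le_one.mp (le_of_eq hb)
      p (Finset.mem_filter.mpr ⟨hp, rfl, rfl⟩)
      q (Finset.mem_filter.mpr ⟨hq, h1.symm, h2.symm⟩)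
  -- existence of a tree in each block
  have hex : ∀ bi < 2 * c, ∀ bj < 2 * r, ∃ p, p ∈ T ∧ p.1 / 2 = bi ∧ p.2 / 2 = bj := by
    intro bi hbi bj hbj
    have hb := hblock bi hbi bj hbj
    obtain ⟨p, hp⟩ := Finset.card_pos.mp (by rw [hb]; norm_num)
    simp only [Finset.mem_filter] at hp
    exact ⟨p, hp.1, hp.2.1, hp.2.2⟩
  -- monotonicity: a right tree forces the next block to be right
  have hmono : ∀ p ∈ T, ∀ q ∈ T, p.1 / 2 = q.1 / 2 → p.2 % 2 = 1 →
      q.2 / 2 = p.2 / 2 + 1 → q.2 % 2 = 1 := by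
    intro p hp q hq h1 hpar hsucc
    by_contra h
    have hq2 : q.2 % 2 = 0 := by omega
    refine absurd ⟨fun he => ?_, by omega, by omega⟩ (hna p hp q hq)
    have : p.2 = q.2 := by rw [he]
    omega
  -- chain: right tree propagates to all later blocks in the same block-row
  have hchain : ∀ p ∈ T, p.2 % 2 = 1 → ∀ bj, p.2 / 2 ≤ bj → bj < 2 * r →
      ∀ q ∈ T, q.1 / 2 = p.1 / 2 → q.2 / 2 = bj → q.2 % 2 = 1 := by
    intro p hp hpar bj
    induction bj with
    | zero =>
      intro hle hlt q hq hq1 hq2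
      have heq := huniq p hp q hq hq1.symm (by omega)
      rw [← heq]; exact hpar
    | succ n ih =>
      intro hle hlt q hq hq1 hq2
      rcases Nat.lt_or_ge (p.2 / 2) (n + 1) with h | h
      · obtain ⟨t, ht, ht1, ht2⟩ := hex (p.1 / 2) (by have := (hgrid p hp).1; omega) n (by omega)
        have htpar := ih (by omega) (by omega) t ht ht1 ht2
        exact hmono t ht q hq (by omega) htpar (by omega)
      · have heq := huniq p hp q hq hq1.symm (by omega)
        rw [← heq]; exact hpar
  -- counting trees of given column parity
  have hcount : ∀ b : ℕ, b < 2 → (T.filter (fun p => p.2 % 2 = b)).card = 2 * r * c := by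
    intro b hb
    have hset : T.filter (fun p => p.2 % 2 = b) =
        (Finset.range (2 * r)).biUnion (fun k => T.filter (fun p => p.2 = 2 * k + b)) := by
      ext p
      simp only [Finset.mem_filter, Finset.mem_biUnion, Finset.mem_range]
      constructor
      · rintro ⟨hp, hpar⟩
        exact ⟨p.2 / 2, by have := (hgrid p hp).2; omega, hp, by omega⟩
      · rintro ⟨k, hk, hp, hpk⟩
        exact ⟨hp, by omega⟩
    rw [hset, Finset.card_biUnion]
    · have hsum : ∀ k ∈ Finset.range (2 * r),
          (T.filter (fun p => p.2 = 2 * k + b)).card = c := by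
        intro k hk
        simp only [Finset.mem_range] at hk
        exact hcol (2 * k + b) (by omega)
      rw [Finset.sum_congr rfl hsum, Finset.sum_const, Finset.card_range, smul_eq_mul]
    · intro x _ y _ hxy
      simp only [Finset.disjoint_left, Finset.mem_filter]
      rintro p ⟨hp, h1⟩ ⟨_, h2⟩
      omega
  -- count of block-rows whose block in block-column bj is "left"
  have hS : ∀ bj < 2 * r, ((Finset.range (2 * c)).filter
      (fun bi => ∀ p ∈ T, p.1 / 2 = bi → p.2 / 2 = bj → p.2 % 2 = 0)).card = c := by
    intro bj hbj
    have key : (T.filter (fun p => p.2 = 2 * bj)).card =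
        ((Finset.range (2 * c)).filter
          (fun bi => ∀ p ∈ T, p.1 / 2 = bi → p.2 / 2 = bj → p.2 % 2 = 0)).card := by
      apply Finset.card_bij (fun a _ => a.1 / 2)
      · intro a ha
        simp only [Finset.mem_filter] at ha
        obtain ⟨haT, ha2⟩ := ha
        simp only [Finset.mem_filter, Finset.mem_range]
        refine ⟨by have := (hgrid a haT).1; omega, ?_⟩
        intro q hq hq1 hq2
        have heq := huniq q hq a haT (by omega) (by omega)
        have : q.2 = a.2 := by rw [heq]
        omega
      · intro a ha b hb h
        simp only [Finset.mem_filter] at ha hb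
        exact huniq a ha.1 b hb.1 h (by omega)
      · intro bi hbi
        simp only [Finset.mem_filter, Finset.mem_range] at hbi
        obtain ⟨hbi', hleft⟩ := hbi
        obtain ⟨t, ht, ht1, ht2⟩ := hex bi hbi' bj hbj
        have hp := hleft t ht ht1 ht2
        exact ⟨t, Finset.mem_filter.mpr ⟨ht, by omega⟩, ht1⟩
    rw [← key]
    exact hcol (2 * bj) (by omega)
  set S1 := (Finset.range (2 * c)).filter
    (fun bi => ∀ p ∈ T, p.1 / 2 = bi → p.2 / 2 = 0 → p.2 % 2 = 0) with hS1def
  set S2 := (Finset.range (2 * c)).filter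
    (fun bi => ∀ p ∈ T, p.1 / 2 = bi → p.2 / 2 = 2 * r - 1 → p.2 % 2 = 0) with hS2def
  have hsub : S2 ⊆ S1 := by
    intro bi hbi
    simp only [hS1def, hS2def, Finset.mem_filter, Finset.mem_range] at hbi ⊢
    obtain ⟨hbi', h2⟩ := hbi
    refine ⟨hbi', ?_⟩
    intro p hp hp1 hp2
    by_contra hpar
    have hpar' : p.2 % 2 = 1 := by omega
    obtain ⟨t, ht, ht1, ht2⟩ := hex bi hbi' (2 * r - 1) (by omega)
    have h3 := hchain p hp hpar' (2 * r - 1) (by omega) (by omega) t ht (by omega) ht2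
    have h4 := h2 t ht ht1 ht2
    omega
  have hScard : S2 = S1 :=
    Finset.eq_of_subset_of_card_le hsub
      (by rw [hS 0 (by omega), hS (2 * r - 1) (by omega)])
  refine ⟨hcount 0 (by omega), hcount 1 (by omega), ?_⟩
  intro bi hbi
  obtain ⟨t0, ht0, ht01, ht02⟩ := hex bi hbi 0 (by omega)
  rcases Nat.mod_two_eq_zero_or_one t0.2 with h0 | h0
  · left
    have hbi1 : bi ∈ S1 := by
      simp only [hS1def, Finset.mem_filter, Finset.mem_range]
      refine ⟨hbi, ?_⟩
      intro p hp hp1 hp2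
      have heq := huniq p hp t0 ht0 (by omega) (by omega)
      have : p.2 = t0.2 := by rw [heq]
      omega
    have hbi2 : bi ∈ S2 := hScard ▸ hbi1
    intro p hp hp1
    by_contra hpar
    have hpar' : p.2 % 2 = 1 := by omega
    have hpg := (hgrid p hp).2
    obtain ⟨t, ht, ht1, ht2⟩ := hex bi hbi (2 * r - 1) (by omega)
    have h3 := hchain p hp hpar' (2 * r - 1) (by omega) (by omega) t ht (by omega) ht2
    simp only [hS2def, Finset.mem_filter] at hbi2
    have h4 := hbi2.2 t ht ht1 ht2
    omega
  · right
    intro p hp hp1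
    have hpg := (hgrid p hp).2
    exact hchain t0 ht0 h0 (p.2 / 2) (by omega) (by omega) p hp (by omega) rfl
end
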